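/- Lagrange integral: along every solution (M(t), γ(t)) of the Euler–Poisson equations on e(3)* with the Hamiltonian H of the ellipsoid of revolution on a smooth plane, and with γ(t) ≠ 0 for all t, the third component M₃(t) of the angular momentum is constant. -/

import Mathlib

open scoped RealInnerProductSpace

noncomputable section

/-- ℝ³ with the standard inner product. -/
abbrev E3 : Type := EuclideanSpace ℝ (Fin 3)

/-- The vector (x, y, z) ∈ ℝ³. -/
def vec3 (x y z : ℝ) : E3 := (EuclideanSpace.equiv (Fin 3) ℝ).symm ![x, y, z]

/-- The cross product in ℝ³. -/
def cross3 (x y : E3) : E3 :=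
  vec3 (x 1 * y 2 - x 2 * y 1) (x 2 * y 0 - x 0 * y 2) (x 0 * y 1 - x 1 * y 0)

/-- The diagonal operator diag(c₁, c₁, c₃) acting on ℝ³. -/
def diagOp (c1 c3 : ℝ) (x : E3) : E3 := vec3 (c1 * x 0) (c1 * x 1) (c3 * x 2)

/-- The vector r(γ) = −Bγ/√⟨γ, Bγ⟩, where B = diag(b₁², b₁², b₃²). -/
def rvec (b1 b3 : ℝ) (γ : E3) : E3 :=
  (-(Real.sqrt ⟪γ, diagOp (b1 ^ 2) (b3 ^ 2) γ⟫)⁻¹) • diagOp (b1 ^ 2) (b3 ^ 2) γ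

/-- a(γ) = γ × r(γ). -/
def avec (b1 b3 : ℝ) (γ : E3) : E3 := cross3 γ (rvec b1 b3 γ)

/-- The inertia matrix I = diag(I₁, I₁, I₃). -/
def Imat (I1 I3 : ℝ) : Matrix (Fin 3) (Fin 3) ℝ := Matrix.diagonal ![I1, I1, I3]

/-- A 3×3 matrix acting on ℝ³. -/
def mulVecE (A : Matrix (Fin 3) (Fin 3) ℝ) (x : E3) : E3 :=
  (EuclideanSpace.equiv (Fin 3) ℝ).symm (A.mulVec ((EuclideanSpace.equiv (Fin 3) ℝ) x))

/-- The matrix A(γ) = (I + m a(γ)⊗a(γ))⁻¹,  where (a⊗a)x = ⟨a, x⟩a. -/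
def Amat (b1 b3 I1 I3 m : ℝ) (γ : E3) : Matrix (Fin 3) (Fin 3) ℝ :=
  (Imat I1 I3 + m • Matrix.vecMulVec ((EuclideanSpace.equiv (Fin 3) ℝ) (avec b1 b3 γ))
      ((EuclideanSpace.equiv (Fin 3) ℝ) (avec b1 b3 γ)))⁻¹

/-- The Hamiltonian of the ellipsoid of revolution rolling on a smooth plane:
H(M, γ) = ½⟨I A(γ)M, A(γ)M⟩ + ½⟨a(γ), A(γ)M⟩² − m g ⟨r(γ), γ⟩. -/
def Ham (b1 b3 I1 I3 m g : ℝ) (M γ : E3) : ℝ :=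
  (1 / 2) * ⟪mulVecE (Imat I1 I3) (mulVecE (Amat b1 b3 I1 I3 m γ) M),
      mulVecE (Amat b1 b3 I1 I3 m γ) M⟫
  + (1 / 2) * ⟪avec b1 b3 γ, mulVecE (Amat b1 b3 I1 I3 m γ) M⟫ ^ 2
  - m * g * ⟪rvec b1 b3 γ, γ⟫

/-- The gradient of H in the M-variable, ∂H/∂M. -/
def gradM (H : E3 → E3 → ℝ) (M γ : E3) : E3 := gradient (fun M' => H M' γ) M

/-- The gradient of H in the γ-variable, ∂H/∂γ. -/
def gradG (H : E3 → E3 → ℝ) (M γ : E3) : E3 := gradient (fun γ' => H M γ') γ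

/-- The differentiable curves (M, γ) solve the Euler–Poisson equations on e(3)* with
Hamiltonian H:  Ṁ = M × ∂H/∂M + γ × ∂H/∂γ,  γ̇ = γ × ∂H/∂M. -/
def EulerPoisson (H : E3 → E3 → ℝ) (M γ : ℝ → E3) : Prop :=
  Differentiable ℝ M ∧ Differentiable ℝ γ ∧
  (∀ t, deriv M t =
      cross3 (M t) (gradM H (M t) (γ t)) + cross3 (γ t) (gradG H (M t) (γ t))) ∧
  (∀ t, deriv γ t = cross3 (γ t) (gradM H (M t) (γ t)))

/-!
The Hamiltonian is invariant under simultaneous rotation `M ↦ R_θ M`, `γ ↦ R_θ γ` about the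
symmetry axis `e₃`: `B` and `I` commute with `R_θ`, the cross product is equivariant, so `r`, `a`
and `A` are equivariant and the inner products in `H` do not change. Differentiating
`H(R_θ M, R_θ γ) = H(M, γ)` at `θ = 0` gives `⟪∂H/∂M, e₃ × M⟫ + ⟪∂H/∂γ, e₃ × γ⟫ = 0`, and this
is exactly the third component of `M × ∂H/∂M + γ × ∂H/∂γ = Ṁ` (Noether's theorem). The chain
rule needs `H` to be differentiable at `(M, γ)`; for `γ ≠ 0` this holds because `A(γ)` is the
inverse of the positive definite matrix `I + m a(γ)a(γ)ᵀ`, whose entries are smooth in `γ`.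
-/

open scoped Matrix

@[simp] lemma vec3_apply_zero (x y z : ℝ) : vec3 x y z 0 = x := rfl

@[simp] lemma vec3_apply_one (x y z : ℝ) : vec3 x y z 1 = y := rfl

@[simp] lemma vec3_apply_two (x y z : ℝ) : vec3 x y z 2 = z := rfl

lemma inner_eq_e3 (x y : E3) : ⟪x, y⟫ = x 0 * y 0 + x 1 * y 1 + x 2 * y 2 := by
  simp [PiLp.inner_apply, Fin.sum_univ_three, mul_comm]

section MulVecE

@[simp] lemma ofLp_mulVecE (A : Matrix (Fin 3) (Fin 3) ℝ) (x : E3) :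
    (mulVecE A x).ofLp = A *ᵥ x.ofLp := rfl

lemma equiv_mulVecE (A : Matrix (Fin 3) (Fin 3) ℝ) (x : E3) :
    EuclideanSpace.equiv (Fin 3) ℝ (mulVecE A x) = A *ᵥ EuclideanSpace.equiv (Fin 3) ℝ x := rfl

lemma mulVecE_apply (A : Matrix (Fin 3) (Fin 3) ℝ) (x : E3) (i : Fin 3) :
    mulVecE A x i = ∑ j, A i j * x j := rfl

lemma mulVecE_mulVecE (A B : Matrix (Fin 3) (Fin 3) ℝ) (x : E3) :
    mulVecE A (mulVecE B x) = mulVecE (A * B) x := by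
  ext1
  simp [Matrix.mulVec_mulVec]

lemma mulVecE_smul (A : Matrix (Fin 3) (Fin 3) ℝ) (c : ℝ) (x : E3) :
    mulVecE A (c • x) = c • mulVecE A x := by
  ext1
  simp [Matrix.mulVec_smul]

lemma diagOp_eq_mulVecE_Imat (c1 c3 : ℝ) (x : E3) : diagOp c1 c3 x = mulVecE (Imat c1 c3) x := by
  ext i
  fin_cases i <;> simp [diagOp, Imat, vec3, Matrix.mulVec, dotProduct, Fin.sum_univ_three]

variable {R : Matrix (Fin 3) (Fin 3) ℝ}

lemma inner_mulVecE_mulVecE_of_transpose_mul_self (hR : Rᵀ * R = 1) (x y : E3) :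
    ⟪mulVecE R x, mulVecE R y⟫ = ⟪x, y⟫ := by
  simp only [EuclideanSpace.inner_eq_star_dotProduct, ofLp_mulVecE, star_trivial,
    Matrix.dotProduct_mulVec, ← Matrix.mulVec_transpose, Matrix.mulVec_mulVec, hR,
    Matrix.one_mulVec]

lemma mulVecE_conj_mulVecE (hR : Rᵀ * R = 1) (A : Matrix (Fin 3) (Fin 3) ℝ) (x : E3) :
    mulVecE (R * A * Rᵀ) (mulVecE R x) = mulVecE R (mulVecE A x) := by
  rw [mulVecE_mulVecE, mulVecE_mulVecE, Matrix.mul_assoc, Matrix.mul_assoc, hR, Matrix.mul_one]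

lemma inv_conj_of_transpose_mul_self (hR : Rᵀ * R = 1) (K : Matrix (Fin 3) (Fin 3) ℝ) :
    (R * K * Rᵀ)⁻¹ = R * K⁻¹ * Rᵀ := by
  rw [Matrix.mul_inv_rev, Matrix.mul_inv_rev, Matrix.inv_eq_left_inv hR,
    Matrix.inv_eq_right_inv hR, Matrix.mul_assoc]

lemma vecMulVec_mulVec_self (R : Matrix (Fin 3) (Fin 3) ℝ) (v : Fin 3 → ℝ) :
    Matrix.vecMulVec (R *ᵥ v) (R *ᵥ v) = R * Matrix.vecMulVec v v * Rᵀ := by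
  rw [Matrix.mul_vecMulVec, Matrix.vecMulVec_mul, Matrix.vecMul_transpose]

end MulVecE

section RotationInvariance

open Real in
def rotZ (θ : ℝ) : Matrix (Fin 3) (Fin 3) ℝ := !![cos θ, -sin θ, 0; sin θ, cos θ, 0; 0, 0, 1]

lemma rotZ_transpose_mul_self (θ : ℝ) : (rotZ θ)ᵀ * rotZ θ = 1 := by
  ext i j
  fin_cases i <;> fin_cases j <;> simp [rotZ, Matrix.mul_apply, Fin.sum_univ_three] <;> ring_nf <;>
    simp

lemma rotZ_mul_transpose_self (θ : ℝ) : rotZ θ * (rotZ θ)ᵀ = 1 :=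
  mul_eq_one_comm.mp (rotZ_transpose_mul_self θ)

lemma rotZ_mul_Imat (θ c1 c3 : ℝ) : rotZ θ * Imat c1 c3 = Imat c1 c3 * rotZ θ := by
  ext i j
  fin_cases i <;> fin_cases j <;> simp [rotZ, Imat, Matrix.mul_apply, Fin.sum_univ_three, mul_comm]

lemma rotZ_mul_Imat_mul_transpose (θ c1 c3 : ℝ) :
    rotZ θ * Imat c1 c3 * (rotZ θ)ᵀ = Imat c1 c3 := by
  rw [rotZ_mul_Imat, Matrix.mul_assoc, rotZ_mul_transpose_self, Matrix.mul_one]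

lemma mulVecE_rotZ (θ : ℝ) (x : E3) :
    mulVecE (rotZ θ) x =
      Real.cos θ • vec3 (x 0) (x 1) 0 + Real.sin θ • vec3 (-x 1) (x 0) 0 + vec3 0 0 (x 2) := by
  ext i
  fin_cases i <;> simp [rotZ, vec3, Matrix.mulVec, dotProduct, Fin.sum_univ_three]
  ring

lemma mulVecE_rotZ_zero (x : E3) : mulVecE (rotZ 0) x = x := by
  ext1
  simp [rotZ, ← Matrix.one_fin_three]

lemma hasDerivAt_mulVecE_rotZ (x : E3) :
    HasDerivAt (fun θ => mulVecE (rotZ θ) x) (vec3 (-x 1) (x 0) 0) 0 := by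
  simp only [mulVecE_rotZ]
  simpa using (((Real.hasDerivAt_cos 0).smul_const (vec3 (x 0) (x 1) 0)).add
    ((Real.hasDerivAt_sin 0).smul_const (vec3 (-x 1) (x 0) 0))).add_const (vec3 0 0 (x 2))

lemma cross3_mulVecE_rotZ (θ : ℝ) (x y : E3) :
    cross3 (mulVecE (rotZ θ) x) (mulVecE (rotZ θ) y) = mulVecE (rotZ θ) (cross3 x y) := by
  ext i
  fin_cases i <;> simp [mulVecE_rotZ, cross3, vec3]
  · ring
  · ring
  · linear_combination (x 0 * y 1 - x 1 * y 0) * Real.sin_sq_add_cos_sq θ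

lemma mulVecE_Imat_mulVecE_rotZ (θ c1 c3 : ℝ) (x : E3) :
    mulVecE (Imat c1 c3) (mulVecE (rotZ θ) x) = mulVecE (rotZ θ) (mulVecE (Imat c1 c3) x) := by
  rw [mulVecE_mulVecE, mulVecE_mulVecE, rotZ_mul_Imat]

lemma rvec_mulVecE_rotZ (b1 b3 θ : ℝ) (γ : E3) :
    rvec b1 b3 (mulVecE (rotZ θ) γ) = mulVecE (rotZ θ) (rvec b1 b3 γ) := by
  simp only [rvec, diagOp_eq_mulVecE_Imat, mulVecE_Imat_mulVecE_rotZ,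
    inner_mulVecE_mulVecE_of_transpose_mul_self (rotZ_transpose_mul_self θ), mulVecE_smul]

lemma avec_mulVecE_rotZ (b1 b3 θ : ℝ) (γ : E3) :
    avec b1 b3 (mulVecE (rotZ θ) γ) = mulVecE (rotZ θ) (avec b1 b3 γ) := by
  rw [avec, avec, rvec_mulVecE_rotZ, cross3_mulVecE_rotZ]

lemma Amat_mulVecE_rotZ (b1 b3 I1 I3 m θ : ℝ) (γ : E3) :
    Amat b1 b3 I1 I3 m (mulVecE (rotZ θ) γ) = rotZ θ * Amat b1 b3 I1 I3 m γ * (rotZ θ)ᵀ := by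
  set a := EuclideanSpace.equiv (Fin 3) ℝ (avec b1 b3 γ)
  have hK : Imat I1 I3 + m • Matrix.vecMulVec (rotZ θ *ᵥ a) (rotZ θ *ᵥ a)
      = rotZ θ * (Imat I1 I3 + m • Matrix.vecMulVec a a) * (rotZ θ)ᵀ := by
    rw [vecMulVec_mulVec_self, Matrix.mul_add, Matrix.add_mul, rotZ_mul_Imat_mul_transpose,
      Matrix.mul_smul, Matrix.smul_mul]
  rw [Amat, Amat, avec_mulVecE_rotZ, equiv_mulVecE, hK,
    inv_conj_of_transpose_mul_self (rotZ_transpose_mul_self θ)]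

lemma Ham_mulVecE_rotZ (b1 b3 I1 I3 m g θ : ℝ) (M γ : E3) :
    Ham b1 b3 I1 I3 m g (mulVecE (rotZ θ) M) (mulVecE (rotZ θ) γ) = Ham b1 b3 I1 I3 m g M γ := by
  simp only [Ham, Amat_mulVecE_rotZ, avec_mulVecE_rotZ, rvec_mulVecE_rotZ,
    mulVecE_conj_mulVecE (rotZ_transpose_mul_self θ), mulVecE_Imat_mulVecE_rotZ,
    inner_mulVecE_mulVecE_of_transpose_mul_self (rotZ_transpose_mul_self θ)]

end RotationInvariance

lemma inner_diagOp_self_pos {c1 c3 : ℝ} (hc1 : 0 < c1) (hc3 : 0 < c3) {γ : E3} (hγ : γ ≠ 0) :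
    0 < ⟪γ, diagOp c1 c3 γ⟫ := by
  have hsq : 0 < γ 0 ^ 2 + γ 1 ^ 2 + γ 2 ^ 2 := by
    simpa [EuclideanSpace.norm_eq, Fin.sum_univ_three] using norm_pos_iff.mpr hγ
  simp only [inner_eq_e3, diagOp, vec3_apply_zero, vec3_apply_one, vec3_apply_two]
  nlinarith [mul_pos (mul_pos hc1 hc3) hsq, add_pos hc1 hc3,
    mul_nonneg (mul_nonneg hc1.le hc1.le) (sq_nonneg (γ 0)),
    mul_nonneg (mul_nonneg hc1.le hc1.le) (sq_nonneg (γ 1)),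
    mul_nonneg (mul_nonneg hc3.le hc3.le) (sq_nonneg (γ 2))]

lemma det_Imat_add_smul_vecMulVec_ne_zero {I1 I3 m : ℝ} (hI1 : 0 < I1) (hI3 : 0 < I3)
    (hm : 0 ≤ m) (a : Fin 3 → ℝ) : (Imat I1 I3 + m • Matrix.vecMulVec a a).det ≠ 0 := by
  have hI : (Imat I1 I3).PosDef := by
    rw [Imat, Matrix.posDef_diagonal_iff]
    intro i
    fin_cases i <;> simp [hI1, hI3]
  have haa : (Matrix.vecMulVec a a).PosSemidef := by
    simpa using Matrix.posSemidef_vecMulVec_self_star a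
  exact ((Matrix.isUnit_iff_isUnit_det _).mp (hI.add_posSemidef (haa.smul hm)).isUnit).ne_zero

section Differentiability

variable {X : Type*} [NormedAddCommGroup X] [NormedSpace ℝ X] {x : X}

section Matrix

variable {n : Type*} [Fintype n] [DecidableEq n] {f : X → Matrix n n ℝ}

theorem DifferentiableAt.matrix_det (hf : ∀ i j, DifferentiableAt ℝ (fun y => f y i j) x) :
    DifferentiableAt ℝ (fun y => (f y).det) x := by
  simp only [Matrix.det_apply]
  fun_prop

theorem DifferentiableAt.matrix_inv_apply (hf : ∀ i j, DifferentiableAt ℝ (fun y => f y i j) x)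
    (hdet : (f x).det ≠ 0) (i j : n) : DifferentiableAt ℝ (fun y => (f y)⁻¹ i j) x := by
  simp only [Matrix.inv_def, Matrix.smul_apply, Matrix.adjugate_apply, Ring.inverse_eq_inv',
    smul_eq_mul]
  refine ((DifferentiableAt.matrix_det hf).inv hdet).mul (DifferentiableAt.matrix_det fun k l => ?_)
  simp only [Matrix.updateRow_apply]
  split_ifs <;> fun_prop

end Matrix

variable {u v : X → E3}

theorem DifferentiableAt.e3_apply (hu : DifferentiableAt ℝ u x) (i : Fin 3) :
    DifferentiableAt ℝ (fun y => u y i) x :=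
  differentiableAt_euclidean.mp hu i

theorem DifferentiableAt.vec3 {a b c : X → ℝ} (ha : DifferentiableAt ℝ a x)
    (hb : DifferentiableAt ℝ b x) (hc : DifferentiableAt ℝ c x) :
    DifferentiableAt ℝ (fun y => vec3 (a y) (b y) (c y)) x := by
  rw [differentiableAt_euclidean]
  intro i
  fin_cases i <;> assumption

theorem DifferentiableAt.cross3 (hu : DifferentiableAt ℝ u x) (hv : DifferentiableAt ℝ v x) :
    DifferentiableAt ℝ (fun y => cross3 (u y) (v y)) x := by
  have := hu.e3_apply
  have := hv.e3_apply
  unfold _root_.cross3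
  apply DifferentiableAt.vec3 <;> fun_prop

theorem DifferentiableAt.diagOp (c1 c3 : ℝ) (hu : DifferentiableAt ℝ u x) :
    DifferentiableAt ℝ (fun y => diagOp c1 c3 (u y)) x := by
  have := hu.e3_apply
  unfold _root_.diagOp
  apply DifferentiableAt.vec3 <;> fun_prop

theorem DifferentiableAt.mulVecE {f : X → Matrix (Fin 3) (Fin 3) ℝ}
    (hf : ∀ i j, DifferentiableAt ℝ (fun y => f y i j) x) (hu : DifferentiableAt ℝ u x) :
    DifferentiableAt ℝ (fun y => mulVecE (f y) (u y)) x := by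
  rw [differentiableAt_euclidean]
  intro i
  have := hu.e3_apply
  simp only [mulVecE_apply]
  fun_prop

variable {b1 b3 I1 I3 m : ℝ}

theorem DifferentiableAt.rvec (hb1 : 0 < b1) (hb3 : 0 < b3) (hu : DifferentiableAt ℝ u x)
    (hux : u x ≠ 0) : DifferentiableAt ℝ (fun y => rvec b1 b3 (u y)) x := by
  have hB := hu.diagOp (b1 ^ 2) (b3 ^ 2)
  have hQ : 0 < ⟪u x, _root_.diagOp (b1 ^ 2) (b3 ^ 2) (u x)⟫ :=
    inner_diagOp_self_pos (by positivity) (by positivity) hux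
  exact ((((hu.inner ℝ hB).sqrt hQ.ne').inv (Real.sqrt_pos.mpr hQ).ne').neg).smul hB

theorem DifferentiableAt.avec (hb1 : 0 < b1) (hb3 : 0 < b3) (hu : DifferentiableAt ℝ u x)
    (hux : u x ≠ 0) : DifferentiableAt ℝ (fun y => avec b1 b3 (u y)) x :=
  hu.cross3 (hu.rvec hb1 hb3 hux)

theorem DifferentiableAt.Amat_apply (hb1 : 0 < b1) (hb3 : 0 < b3) (hI1 : 0 < I1) (hI3 : 0 < I3)
    (hm : 0 ≤ m) (hu : DifferentiableAt ℝ u x) (hux : u x ≠ 0) (i j : Fin 3) :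
    DifferentiableAt ℝ (fun y => Amat b1 b3 I1 I3 m (u y) i j) x := by
  have ha := (hu.avec hb1 hb3 hux).e3_apply
  unfold _root_.Amat
  refine DifferentiableAt.matrix_inv_apply (fun k l => ?_) ?_ i j
  · simp only [Matrix.add_apply, Matrix.smul_apply, Matrix.vecMulVec_apply, smul_eq_mul,
      PiLp.continuousLinearEquiv_apply]
    fun_prop
  · exact det_Imat_add_smul_vecMulVec_ne_zero hI1 hI3 hm _

end Differentiability

theorem differentiableAt_Ham {b1 b3 I1 I3 m : ℝ} (g : ℝ) (hb1 : 0 < b1) (hb3 : 0 < b3)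
    (hI1 : 0 < I1) (hI3 : 0 < I3) (hm : 0 ≤ m) {M γ : E3} (hγ : γ ≠ 0) :
    DifferentiableAt ℝ (fun p : E3 × E3 => Ham b1 b3 I1 I3 m g p.1 p.2) (M, γ) := by
  have hsnd : DifferentiableAt ℝ (fun p : E3 × E3 => p.2) (M, γ) := differentiableAt_snd
  have hAM := DifferentiableAt.mulVecE (hsnd.Amat_apply hb1 hb3 hI1 hI3 hm hγ) differentiableAt_fst
  have hIAM := DifferentiableAt.mulVecE (f := fun _ => Imat I1 I3)
    (fun _ _ => differentiableAt_const _) hAM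
  have := hIAM.inner ℝ hAM
  have := (hsnd.avec hb1 hb3 hγ).inner ℝ hAM
  have := (hsnd.rvec hb1 hb3 hγ).inner ℝ hsnd
  unfold Ham
  fun_prop

lemma fderiv_uncurry_apply {H : E3 → E3 → ℝ} {M γ : E3}
    (hH : DifferentiableAt ℝ (fun p : E3 × E3 => H p.1 p.2) (M, γ)) (u v : E3) :
    fderiv ℝ (fun p : E3 × E3 => H p.1 p.2) (M, γ) (u, v) =
      ⟪gradM H M γ, u⟫ + ⟪gradG H M γ, v⟫ := by
  have hM := hH.hasFDerivAt.comp M (hasFDerivAt_prodMk_left (𝕜 := ℝ) M γ)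
  have hG := hH.hasFDerivAt.comp γ (hasFDerivAt_prodMk_right (𝕜 := ℝ) M γ)
  simp only [Function.comp_def] at hM hG
  rw [gradM, gradG, inner_gradient_left, inner_gradient_left, hM.fderiv, hG.fderiv]
  simp [← map_add]

lemma cross3_gradM_add_cross3_gradG_apply_two {H : E3 → E3 → ℝ}
    (hinv : ∀ θ M γ, H (mulVecE (rotZ θ) M) (mulVecE (rotZ θ) γ) = H M γ) {M γ : E3}
    (hH : DifferentiableAt ℝ (fun p : E3 × E3 => H p.1 p.2) (M, γ)) :
    (cross3 M (gradM H M γ) + cross3 γ (gradG H M γ)) 2 = 0 := by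
  have hcurve := (hasDerivAt_mulVecE_rotZ M).prodMk (hasDerivAt_mulVecE_rotZ γ)
  have hH₀ : DifferentiableAt ℝ (fun p : E3 × E3 => H p.1 p.2)
      (mulVecE (rotZ 0) M, mulVecE (rotZ 0) γ) := by
    rwa [mulVecE_rotZ_zero, mulVecE_rotZ_zero]
  have hconst := hH₀.hasFDerivAt.comp_hasDerivAt 0 hcurve
  simp only [Function.comp_def, hinv, mulVecE_rotZ_zero] at hconst
  have hzero := hconst.unique (hasDerivAt_const 0 _)
  rw [fderiv_uncurry_apply hH, inner_eq_e3, inner_eq_e3] at hzero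
  simp [cross3] at hzero ⊢
  linarith

theorem lagrange_integral_general (b1 b3 I1 I3 m g : ℝ)
    (hb1 : 0 < b1) (hb3 : 0 < b3) (hI1 : 0 < I1) (hI3 : 0 < I3) (hm : 0 < m)
    (M γ : ℝ → E3) (hγne : ∀ t, γ t ≠ 0)
    (hsol : EulerPoisson (Ham b1 b3 I1 I3 m g) M γ) :
    ∀ t s : ℝ, M t 2 = M s 2 := by
  obtain ⟨hM, -, hM', -⟩ := hsol
  have hM₃ : ∀ t, HasDerivAt (fun t => M t 2) (deriv M t 2) t := fun t =>
    (EuclideanSpace.proj (2 : Fin 3) : E3 →L[ℝ] ℝ).hasFDerivAt.comp_hasDerivAt t (hM t).hasDerivAt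
  have hM₃_zero : ∀ t, deriv M t 2 = 0 := fun t => by
    rw [hM' t]
    exact cross3_gradM_add_cross3_gradG_apply_two (Ham_mulVecE_rotZ b1 b3 I1 I3 m g)
      (differentiableAt_Ham g hb1 hb3 hI1 hI3 hm.le (hγne t))
  exact is_const_of_deriv_eq_zero (fun t => (hM₃ t).differentiableAt)
    (fun t => (hM₃ t).deriv.trans (hM₃_zero t))

/-- Lagrange integral: along every solution (M(t), γ(t)) of the Euler–Poisson
equations on e(3)* with the Hamiltonian of the ellipsoid of revolution on a smooth plane, with
γ(t) ≠ 0 for all t, the third component M₃(t) of the angular momentum is constant. -/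
theorem lagrange_integral (b1 b3 I1 I3 m g : ℝ)
    (hb1 : 0 < b1) (hb3 : 0 < b3) (hI1 : 0 < I1) (hI3 : 0 < I3) (hm : 0 < m) (hg : 0 < g)
    (M γ : ℝ → E3) (hγne : ∀ t, γ t ≠ 0)
    (hsol : EulerPoisson (Ham b1 b3 I1 I3 m g) M γ) :
    ∀ t s : ℝ, M t 2 = M s 2 :=
  lagrange_integral_general b1 b3 I1 I3 m g hb1 hb3 hI1 hI3 hm M γ hγne hsol
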